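/- arXiv:2506.02867 — 2 statements merged into one kernel-verified Lean document; each statement's English description precedes it below -/
import Mathlib

section
/- Let m ≥ 1 and let p_1, …, p_m be nonnegative real numbers with ∑_{i=1}^{m} p_i = 1. Then 1 − max_{1 ≤ i ≤ m} p_i ≤ (1/2) · ∑_{i=1}^{m} ( −p_i · log₂ p_i ), i.e., one minus the largest probability is at most half the Shannon entropy of the distribution (p_1, …, p_m). -/
/-!
Let `q = p j` be the largest probability. If `q ≤ 1/2`, every `-log₂ pᵢ` is at least `-log₂ q`,
so the entropy is at least `-log₂ q ≥ 2(1 - q)`. If `q ≥ 1/2`, each other `pᵢ` is at most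
`1 - q`, so the entropy is at least the binary entropy `h(q)`, and `h(q) ≥ 2(1 - q)` on
`[1/2, 1]` because `h` is concave with `h(1/2) = 1` and `h(1) = 0`.
-/

open Real Finset

namespace Real

lemma mul_neg_log_le_negMulLog {x t : ℝ} (hx : 0 ≤ x) (hxt : x ≤ t) :
    x * -log t ≤ negMulLog x := by
  obtain rfl | hx := hx.eq_or_lt
  · simp
  rw [negMulLog, neg_mul_comm]
  exact mul_le_mul_of_nonneg_left (neg_le_neg (log_le_log hx hxt)) hx.le

lemma two_mul_log_two_mul_one_sub_le_neg_log {q : ℝ} (hq : 0 < q) (hq2 : q ≤ 2⁻¹) :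
    2 * log 2 * (1 - q) ≤ -log q := by
  have hlog : log (2 * q) ≤ 2 * q - 1 := log_le_sub_one_of_pos (by positivity)
  rw [log_mul two_ne_zero hq.ne'] at hlog
  nlinarith [log_two_lt_d9]

lemma two_mul_log_two_mul_one_sub_le_binEntropy {q : ℝ} (hq2 : 2⁻¹ ≤ q) (hq1 : q ≤ 1) :
    2 * log 2 * (1 - q) ≤ binEntropy q := by
  have hchord := strictConcave_binEntropy.concaveOn.2 (show (2⁻¹ : ℝ) ∈ Set.Icc 0 1 by norm_num)
    (Set.right_mem_Icc.2 zero_le_one) (show 0 ≤ 2 * (1 - q) by linarith)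
    (show 0 ≤ 2 * q - 1 by linarith) (by ring)
  have hmid : (2 * (1 - q)) • (2⁻¹ : ℝ) + (2 * q - 1) • (1 : ℝ) = q := by
    simp only [smul_eq_mul]; ring
  rw [binEntropy_two_inv, binEntropy_one, hmid, smul_eq_mul, smul_zero, add_zero] at hchord
  linarith

lemma neg_mul_logb_eq_negMulLog_div (b x : ℝ) : -(x * logb b x) = negMulLog x / log b := by
  rw [logb, negMulLog]; ring

end Real

section Entropy

variable {ι : Type*} [Fintype ι] {p : ι → ℝ}

lemma neg_log_le_sum_negMulLog (hp0 : ∀ i, 0 ≤ p i) (hp1 : ∑ i, p i = 1) {q : ℝ}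
    (hq : ∀ i, p i ≤ q) : -log q ≤ ∑ i, negMulLog (p i) :=
  calc -log q = ∑ i, p i * -log q := by rw [← sum_mul, hp1, one_mul]
    _ ≤ ∑ i, negMulLog (p i) := sum_le_sum fun i _ ↦ mul_neg_log_le_negMulLog (hp0 i) (hq i)

lemma binEntropy_le_sum_negMulLog [DecidableEq ι] (hp0 : ∀ i, 0 ≤ p i) (hp1 : ∑ i, p i = 1)
    (j : ι) : binEntropy (p j) ≤ ∑ i, negMulLog (p i) := by
  have hrest : ∑ i ∈ univ.erase j, p i = 1 - p j := by
    rw [← hp1, ← sum_erase_add _ _ (mem_univ j), add_sub_cancel_right]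
  have hle : ∀ i ∈ univ.erase j, p i ≤ 1 - p j := fun i hi ↦
    hrest ▸ single_le_sum (fun k _ ↦ hp0 k) hi
  calc binEntropy (p j) = (1 - p j) * -log (1 - p j) + negMulLog (p j) := by
        simp only [binEntropy_eq_negMulLog_add_negMulLog_one_sub, negMulLog]; ring
    _ = ∑ i ∈ univ.erase j, p i * -log (1 - p j) + negMulLog (p j) := by rw [← sum_mul, hrest]
    _ ≤ ∑ i ∈ univ.erase j, negMulLog (p i) + negMulLog (p j) := by
        gcongr with i hi
        exact mul_neg_log_le_negMulLog (hp0 i) (hle i hi)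
    _ = ∑ i, negMulLog (p i) := sum_erase_add _ _ (mem_univ j)

end Entropy

/-- If `p₁, …, p_m` (`m ≥ 1`) are nonnegative reals summing to `1`, then
`1 − max_i p_i ≤ (1/2) · ∑ᵢ (−p_i log₂ p_i)`, i.e. one minus the largest probability is at
most half the Shannon entropy (base 2, with `0 · log₂ 0 = 0`, matching `Real.logb 2 0 = 0`). -/
theorem one_sub_max_le_half_entropy (m : ℕ) (hm : 1 ≤ m) (p : Fin m → ℝ)
    (hp0 : ∀ i, 0 ≤ p i) (hp1 : ∑ i, p i = 1) :
    1 - Finset.univ.sup' ⟨⟨0, hm⟩, Finset.mem_univ _⟩ p ≤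
      (1 / 2) * ∑ i, -(p i * Real.logb 2 (p i)) := by
  obtain ⟨j, -, hqj⟩ := exists_mem_eq_sup' ⟨⟨0, hm⟩, mem_univ _⟩ p
  set q := univ.sup' ⟨⟨0, hm⟩, mem_univ _⟩ p
  have hle (i : Fin m) : p i ≤ q := le_sup' p (mem_univ i)
  have hnats : 2 * log 2 * (1 - q) ≤ ∑ i, negMulLog (p i) := by
    rcases le_total q 2⁻¹ with hq | hq
    · obtain ⟨i, -, hi⟩ := exists_ne_zero_of_sum_ne_zero (hp1.trans_ne one_ne_zero)
      have hq0 : 0 < q := ((hp0 i).lt_of_ne' hi).trans_le (hle i)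
      exact (two_mul_log_two_mul_one_sub_le_neg_log hq0 hq).trans
        (neg_log_le_sum_negMulLog hp0 hp1 hle)
    · have hq1 : q ≤ 1 := hqj ▸ hp1 ▸ single_le_sum (fun i _ ↦ hp0 i) (mem_univ j)
      exact (two_mul_log_two_mul_one_sub_le_binEntropy hq hq1).trans
        (hqj ▸ binEntropy_le_sum_negMulLog hp0 hp1 j)
  simp_rw [neg_mul_logb_eq_negMulLog_div, ← sum_div]
  have hlog2 := log_pos one_lt_two
  field_simp
  linarith
end

section
/- Let y and Z be jointly distributed discrete random variables on a common probability space, where y takes values in a finite set 𝒴 and Z takes values in a finite set. Then ∑_z P(Z=z) · ( 1 − max_{i ∈ 𝒴} P(y = i | Z = z) ) ≤ (1/2) · H(y | Z), the sum ranging over z with P(Z=z) > 0; that is, the Bayes error of predicting y from Z is at most half the conditional entropy of y given Z. -/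
/-!  Self-contained finite-probability setup.

A finite probability space is given by a mass function `μ : Ω → ℝ` on a `Fintype Ω`
with `∀ ω, 0 ≤ μ ω` and `∑ ω, μ ω = 1`.  All logarithms are base 2; the conventions
`0 · log₂ 0 = 0` and `x / 0 = 0` agree with Lean's `Real.logb 2 0 = 0` and division. -/

-- Probability of the event `{ω | p ω}` under the mass function `μ`.
open Classical in
noncomputable def pr {Ω : Type*} [Fintype Ω] (μ : Ω → ℝ) (p : Ω → Prop) : ℝ :=
  ∑ ω, if p ω then μ ω else 0

/-- Shannon entropy (base 2) of the discrete random variable `X`. -/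
noncomputable def entropy {Ω α : Type*} [Fintype Ω] [Fintype α]
    (μ : Ω → ℝ) (X : Ω → α) : ℝ :=
  -∑ a, pr μ (fun ω => X ω = a) * Real.logb 2 (pr μ (fun ω => X ω = a))

/-- Conditional entropy `H(X | Y) = ∑_b P(Y = b) · H(X | Y = b)`, where the conditional
distribution is `P(X = a | Y = b) = P(X = a ∧ Y = b) / P(Y = b)`. -/
noncomputable def condEntropy {Ω α β : Type*} [Fintype Ω] [Fintype α] [Fintype β]
    (μ : Ω → ℝ) (X : Ω → α) (Y : Ω → β) : ℝ :=
  ∑ b, pr μ (fun ω => Y ω = b) *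
    (-∑ a,
      (pr μ (fun ω => X ω = a ∧ Y ω = b) / pr μ (fun ω => Y ω = b)) *
        Real.logb 2 (pr μ (fun ω => X ω = a ∧ Y ω = b) / pr μ (fun ω => Y ω = b)))

/-- Mutual information `I(X ; Y) = H(X) − H(X | Y)`. -/
noncomputable def mutualInfo {Ω α β : Type*} [Fintype Ω] [Fintype α] [Fintype β]
    (μ : Ω → ℝ) (X : Ω → α) (Y : Ω → β) : ℝ :=
  entropy μ X - condEntropy μ X Y

/-- Conditional mutual information `I(X ; Y | Z) = H(X | Z) − H(X | (Y, Z))`. -/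
noncomputable def condMutualInfo {Ω α β γ : Type*}
    [Fintype Ω] [Fintype α] [Fintype β] [Fintype γ]
    (μ : Ω → ℝ) (X : Ω → α) (Y : Ω → β) (Z : Ω → γ) : ℝ :=
  condEntropy μ X Z - condEntropy μ X (fun ω => (Y ω, Z ω))

/-- Binary entropy function `H_b(p) = −p log₂ p − (1 − p) log₂ (1 − p)`. -/
noncomputable def binEntropy (p : ℝ) : ℝ :=
  -(p * Real.logb 2 p) - (1 - p) * Real.logb 2 (1 - p)

/-!
Conditionally on `Z = z`, let `p` be the law of `y` and `q = max p`. If `q ≤ 1/2`, then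
`H(p) ≥ -log₂ q ≥ 2 (1 - q)`. If `q > 1/2`, grouping all other outcomes into one of mass
`1 - q` can only lower the entropy, so `H(p) ≥ H_b(q)`, and by concavity `H_b` lies above the
chord `2 (1 - q)` joining its values at `1/2` and `1`. Averaging over `z` gives the theorem.
-/

open Finset
open Real hiding binEntropy

lemma mul_logb_le_mul_logb_of_le {b p c : ℝ} (hb : 1 < b) (hp : 0 ≤ p) (hpc : p ≤ c) :
    p * logb b p ≤ p * logb b c := by
  rcases hp.eq_or_lt with rfl | hp
  · simp
  · exact mul_le_mul_of_nonneg_left (logb_le_logb_of_le hb hp hpc) hp.le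

lemma sum_mul_logb_le_sum_mul_logb_of_le {ι : Type*} {s : Finset ι} {p : ι → ℝ} {b c : ℝ}
    (hb : 1 < b) (hp : ∀ i ∈ s, 0 ≤ p i) (hpc : ∀ i ∈ s, p i ≤ c) :
    ∑ i ∈ s, p i * logb b (p i) ≤ (∑ i ∈ s, p i) * logb b c := by
  rw [sum_mul]
  exact sum_le_sum fun i hi => mul_logb_le_mul_logb_of_le hb (hp i hi) (hpc i hi)

lemma two_mul_one_sub_le_neg_logb_two {q : ℝ} (hq0 : 0 < q) (hq : q ≤ 1 / 2) :
    2 * (1 - q) ≤ -logb 2 q := by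
  have hlog2 : 0 < log 2 := log_pos one_lt_two
  have hlog2_le : log 2 ≤ 1 := by linarith [log_le_sub_one_of_pos two_pos]
  have hlog2q : log (2 * q) ≤ 2 * q - 1 := log_le_sub_one_of_pos (by linarith)
  rw [log_mul two_ne_zero hq0.ne'] at hlog2q
  rw [logb, le_neg, div_le_iff₀ hlog2]
  nlinarith

lemma binEntropy_mul_log_two (p : ℝ) : binEntropy p * log 2 = Real.binEntropy p := by
  have hlog2 : log 2 ≠ 0 := (log_pos one_lt_two).ne'
  rw [binEntropy, Real.binEntropy, log_inv, log_inv, logb, logb]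
  field_simp
  ring

lemma two_mul_one_sub_le_binEntropy {q : ℝ} (hq : 1 / 2 ≤ q) (hq1 : q ≤ 1) :
    2 * (1 - q) ≤ binEntropy q := by
  have hchord := Real.strictConcave_binEntropy.concaveOn.2
    (show (2 : ℝ)⁻¹ ∈ Set.Icc (0 : ℝ) 1 by norm_num) (show (1 : ℝ) ∈ Set.Icc (0 : ℝ) 1 by norm_num)
    (show (0 : ℝ) ≤ 2 * (1 - q) by linarith) (show (0 : ℝ) ≤ 2 * q - 1 by linarith)
    (show 2 * (1 - q) + (2 * q - 1) = 1 by ring)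
  have hq_eq : (2 * (1 - q)) • (2 : ℝ)⁻¹ + (2 * q - 1) • (1 : ℝ) = q := by
    simp only [smul_eq_mul]; ring
  rw [hq_eq, Real.binEntropy_two_inv, Real.binEntropy_one, smul_eq_mul, smul_eq_mul,
    ← binEntropy_mul_log_two] at hchord
  exact le_of_mul_le_mul_right (by linarith) (log_pos one_lt_two)

lemma one_sub_sup'_le_half_neg_sum_mul_logb {α : Type*} [Fintype α] [Nonempty α]
    (p : α → ℝ) (hp : ∀ i, 0 ≤ p i) (hp1 : ∑ i, p i = 1) :
    1 - univ.sup' univ_nonempty p ≤ 1 / 2 * -∑ i, p i * logb 2 (p i) := by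
  classical
  obtain ⟨i₀, -, hi₀⟩ := exists_mem_eq_sup' univ_nonempty p
  set q := univ.sup' univ_nonempty p
  have hle_q : ∀ i, p i ≤ q := fun i => le_sup' p (mem_univ i)
  rcases le_or_gt q (1 / 2) with hsmall | hlarge
  · have hq0 : 0 < q := by
      by_contra! hq0
      have hp0 : ∀ i, p i = 0 := fun i => le_antisymm ((hle_q i).trans hq0) (hp i)
      simp [hp0] at hp1
    have hsum := sum_mul_logb_le_sum_mul_logb_of_le (s := univ) one_lt_two
      (fun i _ => hp i) (fun i _ => hle_q i)
    rw [hp1, one_mul] at hsum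
    linarith [two_mul_one_sub_le_neg_logb_two hq0 hsmall]
  · have hrest : ∑ i ∈ univ.erase i₀, p i = 1 - q := by
      rw [← hp1, ← add_sum_erase _ p (mem_univ i₀), hi₀]; ring
    have hle_rest : ∀ i ∈ univ.erase i₀, p i ≤ 1 - q := fun i hi =>
      hrest ▸ single_le_sum (fun j _ => hp j) hi
    have hsum := sum_mul_logb_le_sum_mul_logb_of_le one_lt_two (fun i _ => hp i) hle_rest
    rw [hrest] at hsum
    have hq1 : q ≤ 1 := by
      rw [hi₀, ← hp1]; exact single_le_sum (fun i _ => hp i) (mem_univ i₀)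
    have hbin := two_mul_one_sub_le_binEntropy hlarge.le hq1
    rw [binEntropy] at hbin
    rw [← add_sum_erase _ _ (mem_univ i₀), ← hi₀]
    linarith

section Probability

variable {Ω : Type*} [Fintype Ω] {μ : Ω → ℝ}

lemma pr_nonneg (hμ : ∀ ω, 0 ≤ μ ω) (p : Ω → Prop) : 0 ≤ pr μ p :=
  sum_nonneg fun ω _ => by split_ifs <;> simp [hμ ω]

lemma sum_pr_eq_and {α : Type*} [Fintype α] (y : Ω → α) (p : Ω → Prop) :
    ∑ i, pr μ (fun ω => y ω = i ∧ p ω) = pr μ p := by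
  classical
  unfold pr
  rw [sum_comm]
  refine sum_congr rfl fun ω _ => ?_
  by_cases hp : p ω <;> simp [hp]

open Classical in
lemma condEntropy_eq_sum_filter_pos {α β : Type*} [Fintype α] [Fintype β]
    (hμ : ∀ ω, 0 ≤ μ ω) (X : Ω → α) (Y : Ω → β) :
    condEntropy μ X Y = ∑ b ∈ univ.filter (fun b => 0 < pr μ (fun ω => Y ω = b)),
      pr μ (fun ω => Y ω = b) *
        (-∑ a, (pr μ (fun ω => X ω = a ∧ Y ω = b) / pr μ (fun ω => Y ω = b)) *
          logb 2 (pr μ (fun ω => X ω = a ∧ Y ω = b) / pr μ (fun ω => Y ω = b))) := by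
  refine (sum_subset (filter_subset _ _) fun b _ hb => ?_).symm
  have hzero : pr μ (fun ω => Y ω = b) = 0 :=
    ((pr_nonneg hμ _).eq_or_lt.resolve_right fun hpos => hb (by simp [hpos])).symm
  simp [hzero]

end Probability

open Classical in
theorem bayes_error_le_half_condEntropy_general
    {Ω 𝒴 γ : Type*} [Fintype Ω] [Fintype 𝒴] [Nonempty 𝒴] [Fintype γ]
    (μ : Ω → ℝ) (hμ0 : ∀ ω, 0 ≤ μ ω)
    (y : Ω → 𝒴) (Z : Ω → γ) :
    ∑ z ∈ Finset.univ.filter (fun z : γ => 0 < pr μ (fun ω => Z ω = z)),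
        pr μ (fun ω => Z ω = z) *
          (1 - Finset.univ.sup' Finset.univ_nonempty (fun i : 𝒴 =>
            pr μ (fun ω => y ω = i ∧ Z ω = z) / pr μ (fun ω => Z ω = z))) ≤
      (1 / 2) * condEntropy μ y Z := by
  rw [condEntropy_eq_sum_filter_pos hμ0, mul_sum]
  refine sum_le_sum fun z hz => ?_
  have hZ : 0 < pr μ (fun ω => Z ω = z) := (mem_filter.mp hz).2
  have hcond_sum : ∑ i, pr μ (fun ω => y ω = i ∧ Z ω = z) / pr μ (fun ω => Z ω = z) = 1 := by
    rw [← sum_div, sum_pr_eq_and, div_self hZ.ne']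
  have hbound := one_sub_sup'_le_half_neg_sum_mul_logb _
    (fun i => div_nonneg (pr_nonneg hμ0 _) hZ.le) hcond_sum
  exact (mul_le_mul_of_nonneg_left hbound hZ.le).trans_eq (by ring)

open Classical in
theorem bayes_error_le_half_condEntropy
    {Ω 𝒴 γ : Type*} [Fintype Ω] [Fintype 𝒴] [Nonempty 𝒴] [Fintype γ]
    (μ : Ω → ℝ) (hμ0 : ∀ ω, 0 ≤ μ ω) (hμ1 : ∑ ω, μ ω = 1)
    (y : Ω → 𝒴) (Z : Ω → γ) :
    ∑ z ∈ Finset.univ.filter (fun z : γ => 0 < pr μ (fun ω => Z ω = z)),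
        pr μ (fun ω => Z ω = z) *
          (1 - Finset.univ.sup' Finset.univ_nonempty (fun i : 𝒴 =>
            pr μ (fun ω => y ω = i ∧ Z ω = z) / pr μ (fun ω => Z ω = z))) ≤
      (1 / 2) * condEntropy μ y Z :=
  bayes_error_le_half_condEntropy_general μ hμ0 y Z
end
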